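/- arXiv:1306.5364 — 7 statements merged into one kernel-verified Lean document; each statement's English description precedes it below -/
import Mathlib

section
/- Fix M > 0 and let r : ℝ² → ℝ be the function assigning to (u,v) the unique real number r(u,v) > 2M with e^{(v−u)/(2M)} = (1 − 2M/r)/((2M/r)·e^{−r/(2M)}). Then r is infinitely differentiable (C^∞) on ℝ². -/
/-!
Writing `x = r/(2M)`, the defining relation says `eˣ (x - 1) = e^{(v-u)/(2M)}`. The map
`x ↦ eˣ (x - 1)` is smooth with derivative `x eˣ > 0` on `x > 0`, hence injective there, so the
inverse function theorem gives a smooth local inverse; injectivity forces `r/(2M)` to agree with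
that inverse composed with the smooth map `(u, v) ↦ e^{(v-u)/(2M)}` near every point, without any
a priori continuity of `r`.
-/

open Real Filter Set Topology

section InverseFunction

variable {𝕂 : Type*} [RCLike 𝕂]
  {D : Type*} [NormedAddCommGroup D] [NormedSpace 𝕂 D]
  {E : Type*} [NormedAddCommGroup E] [NormedSpace 𝕂 E] [CompleteSpace E]
  {F : Type*} [NormedAddCommGroup F] [NormedSpace 𝕂 F]
  {n : WithTop ℕ∞} {p : D} {h : D → E} {s : Set E}

theorem ContDiffAt.of_comp_of_injOn {f : E → F} {f' : E ≃L[𝕂] F}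
    (hf : ContDiffAt 𝕂 n f (h p)) (hf' : HasFDerivAt f (f' : E →L[𝕂] F) (h p)) (hn : n ≠ 0)
    (hinj : InjOn f s) (hs : s ∈ 𝓝 (h p)) (hhs : ∀ᶠ q in 𝓝 p, h q ∈ s)
    (hfh : ContDiffAt 𝕂 n (f ∘ h) p) : ContDiffAt 𝕂 n h p := by
  set g := hf.localInverse hf' hn
  have hg : ContDiffAt 𝕂 n g (f (h p)) := hf.to_localInverse hf' hn
  have hright : ∀ᶠ q in 𝓝 p, f (g (f (h q))) = f (h q) :=
    hfh.continuousAt.eventually (hf.hasStrictFDerivAt' hf' hn).eventually_right_inverse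
  have hgfh_tendsto : Tendsto (g ∘ f ∘ h) (𝓝 p) (𝓝 (h p)) := by
    simpa [Function.comp_def, g, hf.localInverse_apply_image hf' hn] using
      (hg.continuousAt.comp (x := p) hfh.continuousAt).tendsto
  have hleft : g ∘ f ∘ h =ᶠ[𝓝 p] h := by
    filter_upwards [hright, hgfh_tendsto.eventually hs, hhs] with q hq hgq hq'
    exact hinj hgq hq' hq
  exact (hg.comp p hfh).congr_of_eventuallyEq hleft.symm

theorem ContDiffAt.of_comp_of_injOn_of_hasDerivAt {h : D → 𝕂} {s : Set 𝕂} {f : 𝕂 → 𝕂} {f' : 𝕂}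
    (hf : ContDiffAt 𝕂 n f (h p)) (hf' : HasDerivAt f f' (h p)) (hf'0 : f' ≠ 0) (hn : n ≠ 0)
    (hinj : InjOn f s) (hs : s ∈ 𝓝 (h p)) (hhs : ∀ᶠ q in 𝓝 p, h q ∈ s)
    (hfh : ContDiffAt 𝕂 n (f ∘ h) p) : ContDiffAt 𝕂 n h p := by
  refine hf.of_comp_of_injOn (f' := ContinuousLinearEquiv.unitsEquivAut 𝕂 (Units.mk0 f' hf'0))
    ?_ hn hinj hs hhs hfh
  have hf'_eq : (ContinuousLinearEquiv.unitsEquivAut 𝕂 (Units.mk0 f' hf'0) : 𝕂 →L[𝕂] 𝕂) =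
      ContinuousLinearMap.toSpanSingleton 𝕂 f' := by
    ext
    simp
  rw [hf'_eq]
  exact hf'.hasFDerivAt

end InverseFunction

section Kruskal

/-- With `x = r/(2M)`, this is `-UV` in Kruskal–Szekeres coordinates. -/
noncomputable def kruskalProduct (x : ℝ) : ℝ := exp x * (x - 1)

theorem hasDerivAt_kruskalProduct (x : ℝ) : HasDerivAt kruskalProduct (exp x * x) x :=
  ((hasDerivAt_exp x).mul ((hasDerivAt_id' x).sub_const 1)).congr_deriv (by ring)

theorem contDiff_kruskalProduct {n : WithTop ℕ∞} : ContDiff ℝ n kruskalProduct :=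
  contDiff_exp.mul (contDiff_id.sub contDiff_const)

theorem strictMonoOn_kruskalProduct : StrictMonoOn kruskalProduct (Ici 0) := by
  refine strictMonoOn_of_deriv_pos (convex_Ici 0)
    (contDiff_kruskalProduct (n := 0)).continuous.continuousOn fun x hx ↦ ?_
  rw [interior_Ici] at hx
  rw [(hasDerivAt_kruskalProduct x).deriv]
  exact mul_pos (exp_pos x) hx

theorem div_mul_exp_neg_eq_kruskalProduct {a ρ : ℝ} (ha : a ≠ 0) (hρ : ρ ≠ 0) :
    (1 - a / ρ) / ((a / ρ) * exp (-ρ / a)) = kruskalProduct (ρ / a) := by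
  rw [kruskalProduct, neg_div, exp_neg]
  field_simp

end Kruskal

/-- Fix M > 0 and let r : ℝ² → ℝ be the function assigning to
(u,v) the unique real number r(u,v) > 2M with
e^{(v−u)/(2M)} = (1 − 2M/r)/((2M/r)·e^{−r/(2M)}).
Then r is infinitely differentiable (C^∞) on ℝ². -/
theorem stmt_2 (M : ℝ) (hM : 0 < M) (r : ℝ × ℝ → ℝ)
    (hr : ∀ u v : ℝ, 2 * M < r (u, v) ∧
      Real.exp ((v - u) / (2 * M)) =
        (1 - 2 * M / r (u, v)) / ((2 * M / r (u, v)) * Real.exp (-r (u, v) / (2 * M)))) :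
    ContDiff ℝ (⊤ : ℕ∞) r := by
  have hM2 : 0 < 2 * M := by positivity
  have hr_pos (q : ℝ × ℝ) : 0 < r q := hM2.trans (hr q.1 q.2).1
  have hpos (q : ℝ × ℝ) : 0 < r q / (2 * M) := div_pos (hr_pos q) hM2
  have hrel : kruskalProduct ∘ (fun q ↦ r q / (2 * M)) = fun q ↦ exp ((q.2 - q.1) / (2 * M)) := by
    funext q
    rw [Function.comp_apply, ← div_mul_exp_neg_eq_kruskalProduct hM2.ne' (hr_pos q).ne',
      (hr q.1 q.2).2]
  rw [contDiff_iff_contDiffAt]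
  intro p
  have hx : ContDiffAt ℝ (⊤ : ℕ∞) (fun q ↦ r q / (2 * M)) p :=
    contDiff_kruskalProduct.contDiffAt.of_comp_of_injOn_of_hasDerivAt
      (hasDerivAt_kruskalProduct _) (mul_pos (exp_pos _) (hpos p)).ne' (by simp)
      strictMonoOn_kruskalProduct.injOn (Ici_mem_nhds (hpos p))
      (Eventually.of_forall fun q ↦ (hpos q).le)
      (hrel ▸ (contDiff_exp.comp ((contDiff_snd.sub contDiff_fst).div_const _)).contDiffAt)
  simpa [mul_div_cancel₀ _ hM2.ne'] using hx.const_smul (2 * M)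
end

section
/- Define φ(x) = eˣ·(x − 1). The restriction of φ to (0, ∞) is a strictly increasing bijection onto (−1, ∞) whose inverse ψ : (−1, ∞) → (0, ∞) is C^∞. Consequently, for M > 0 the function R(U,V) := 2M·ψ(−UV) is C^∞ on the open set {(U,V) ∈ ℝ² : UV < 1}; on the Kruskal domain (−∞,0] × (0,∞) it satisfies R(U,V) ≥ 2M, with R(U,V) = 2M if and only if U = 0, and R(−e^{−u/(2M)}, e^{v/(2M)}) = r(u,v) for all (u,v) ∈ ℝ², where r is the Schwarzschild radius function. -/
/-!
On `(0, ∞)` the function `φ x = eˣ (x - 1)` has derivative `eˣ x > 0`, so it is strictly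
increasing; it tends to `∞` and `φ 0 = -1`, so by the intermediate value theorem it maps `(0, ∞)`
onto `(-1, ∞)`. Since `φ` is smooth with nonvanishing derivative, the inverse function theorem
makes its inverse `ψ` smooth, and so is `(U, V) ↦ 2M ψ(-UV)` wherever `-UV > -1`.
On the Kruskal domain `-UV ≥ 0 = φ 1`, whence `ψ(-UV) ≥ 1` with equality iff `UV = 0`.
Finally, with `x = r / 2M` the defining relation of `r` reads `φ x = e^{(v-u)/2M} = -UV`,
so `2M ψ(-UV) = 2M x = r`.
-/

open Real Set Filter Topology
open scoped ContDiff

section InverseFunction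

variable {𝕂 : Type*} [RCLike 𝕂]
  {E : Type*} [NormedAddCommGroup E] [NormedSpace 𝕂 E] [CompleteSpace E]
  {F : Type*} [NormedAddCommGroup F] [NormedSpace 𝕂 F]

theorem ContDiffAt.of_rightInverse_of_injOn {f : E → F} {g : F → E} {f' : E ≃L[𝕂] F}
    {s : Set E} {b : F} {n : WithTop ℕ∞} (hn : n ≠ 0) (hs : IsOpen s) (hinj : InjOn f s)
    (hg : ∀ᶠ y in 𝓝 b, g y ∈ s ∧ f (g y) = y) (hf : ContDiffAt 𝕂 n f (g b))
    (hf' : HasFDerivAt f (f' : E →L[𝕂] F) (g b)) : ContDiffAt 𝕂 n g b := by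
  obtain ⟨hgb, hfgb⟩ := hg.self_of_nhds
  have hstrict := hf.hasStrictFDerivAt' hf' hn
  have hsmooth := hf.to_localInverse hf' hn
  rw [hfgb] at hsmooth
  refine hsmooth.congr_of_eventuallyEq ?_
  have hinv := hstrict.eventually_right_inverse
  have hmem := hstrict.localInverse_tendsto (hs.mem_nhds hgb)
  rw [hfgb] at hinv hmem
  filter_upwards [hg, hinv, hmem] with y ⟨hgy, hfgy⟩ hfy hy
  exact hinj hgy hy (hfgy.trans hfy.symm)

end InverseFunction

namespace Kruskal

noncomputable def phi (x : ℝ) : ℝ := exp x * (x - 1)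

theorem hasDerivAt_phi (x : ℝ) : HasDerivAt phi (exp x * x) x :=
  ((hasDerivAt_exp x).mul ((hasDerivAt_id' x).sub_const 1)).congr_deriv (by ring)

theorem contDiff_phi {n : WithTop ℕ∞} : ContDiff ℝ n phi :=
  contDiff_exp.mul (contDiff_id.sub contDiff_const)

theorem continuous_phi : Continuous phi := contDiff_phi.continuous (n := 0)

@[simp] theorem phi_zero : phi 0 = -1 := by simp [phi]

@[simp] theorem phi_one : phi 1 = 0 := by simp [phi]

theorem strictMonoOn_phi : StrictMonoOn phi (Ici 0) := by
  refine strictMonoOn_of_deriv_pos (convex_Ici 0) continuous_phi.continuousOn ?_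
  intro x hx
  rw [interior_Ici, mem_Ioi] at hx
  rw [(hasDerivAt_phi x).deriv]
  positivity

theorem mapsTo_phi : MapsTo phi (Ioi 0) (Ioi (-1)) := fun x hx => by
  simpa using strictMonoOn_phi (mem_Ici.2 le_rfl) (mem_Ici.2 (le_of_lt hx)) hx

theorem surjOn_phi : SurjOn phi (Ioi 0) (Ioi (-1)) := by
  intro y hy
  rw [mem_Ioi] at hy
  have hy_lt : y < phi (y + 2) := by
    have := one_le_exp (by linarith : 0 ≤ y + 2)
    simp only [phi]
    nlinarith
  obtain ⟨x, hx, rfl⟩ := intermediate_value_Ioo (by linarith : (0 : ℝ) ≤ y + 2)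
    continuous_phi.continuousOn (by simpa using And.intro hy hy_lt)
  exact ⟨x, hx.1, rfl⟩

theorem bijOn_phi : BijOn phi (Ioi 0) (Ioi (-1)) :=
  ⟨mapsTo_phi, (strictMonoOn_phi.mono Ioi_subset_Ici_self).injOn, surjOn_phi⟩

noncomputable def psi : ℝ → ℝ := Function.invFunOn phi (Ioi 0)

theorem invOn_psi : InvOn psi phi (Ioi 0) (Ioi (-1)) := bijOn_phi.invOn_invFunOn

theorem mapsTo_psi : MapsTo psi (Ioi (-1)) (Ioi 0) := surjOn_phi.mapsTo_invFunOn

theorem contDiffOn_psi : ContDiffOn ℝ ω psi (Ioi (-1)) := by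
  intro y hy
  have hpos : exp (psi y) * psi y ≠ 0 := (mul_pos (exp_pos _) (mapsTo_psi hy)).ne'
  refine (ContDiffAt.of_rightInverse_of_injOn (by simp) isOpen_Ioi bijOn_phi.injOn ?_
    contDiff_phi.contDiffAt ((hasDerivAt_phi _).hasFDerivAt_equiv hpos)).contDiffWithinAt
  filter_upwards [isOpen_Ioi.mem_nhds hy] with z hz
  exact ⟨mapsTo_psi hz, invOn_psi.2 hz⟩

theorem psi_zero : psi 0 = 1 := by
  simpa using invOn_psi.1 (mem_Ioi.2 one_pos)

theorem one_le_psi_iff {y : ℝ} (hy : -1 < y) : 1 ≤ psi y ↔ 0 ≤ y := by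
  conv_rhs => rw [← invOn_psi.2 hy, ← phi_one]
  exact (strictMonoOn_phi.le_iff_le (mem_Ici.2 zero_le_one)
    (Ioi_subset_Ici_self (mapsTo_psi hy))).symm

theorem psi_eq_one_iff {y : ℝ} (hy : -1 < y) : psi y = 1 ↔ y = 0 :=
  ⟨fun h => by rw [← invOn_psi.2 hy, h, phi_one], fun h => h ▸ psi_zero⟩

theorem div_div_mul_exp_eq_phi {m r : ℝ} (hm : m ≠ 0) (hr : r ≠ 0) :
    (1 - m / r) / ((m / r) * exp (-r / m)) = phi (r / m) := by
  rw [phi, neg_div, exp_neg]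
  field_simp

end Kruskal

open Kruskal in
/-- φ(x) = eˣ·(x−1) restricts to a strictly increasing bijection
(0,∞) → (−1,∞) with C^∞ inverse ψ; consequently R(U,V) := 2M·ψ(−UV) is C^∞ on
{UV < 1}, satisfies R ≥ 2M on the Kruskal domain (−∞,0] × (0,∞) with equality
exactly on {U = 0}, and R(−e^{−u/(2M)}, e^{v/(2M)}) = r(u,v) where r is the
Schwarzschild radius function. -/
theorem stmt_5 (M : ℝ) (hM : 0 < M) (r : ℝ × ℝ → ℝ)
    (hr : ∀ u v : ℝ, 2 * M < r (u, v) ∧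
      Real.exp ((v - u) / (2 * M)) =
        (1 - 2 * M / r (u, v)) / ((2 * M / r (u, v)) * Real.exp (-r (u, v) / (2 * M)))) :
    StrictMonoOn (fun x : ℝ => Real.exp x * (x - 1)) (Set.Ioi 0) ∧
    Set.BijOn (fun x : ℝ => Real.exp x * (x - 1)) (Set.Ioi 0) (Set.Ioi (-1)) ∧
    ∃ ψ : ℝ → ℝ,
      (∀ x ∈ Set.Ioi (0 : ℝ), ψ (Real.exp x * (x - 1)) = x) ∧
      (∀ y ∈ Set.Ioi (-1 : ℝ), ψ y ∈ Set.Ioi (0 : ℝ) ∧ Real.exp (ψ y) * (ψ y - 1) = y) ∧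
      ContDiffOn ℝ (⊤ : ℕ∞) ψ (Set.Ioi (-1)) ∧
      ContDiffOn ℝ (⊤ : ℕ∞) (fun p : ℝ × ℝ => 2 * M * ψ (-(p.1 * p.2)))
        {p : ℝ × ℝ | p.1 * p.2 < 1} ∧
      (∀ U V : ℝ, U ≤ 0 → 0 < V →
        2 * M ≤ 2 * M * ψ (-(U * V)) ∧ (2 * M * ψ (-(U * V)) = 2 * M ↔ U = 0)) ∧
      (∀ u v : ℝ,
        2 * M * ψ (-(-Real.exp (-u / (2 * M)) * Real.exp (v / (2 * M)))) = r (u, v)) := by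
  have h2M : 0 < 2 * M := by positivity
  have hpsi_smooth : ContDiffOn ℝ (⊤ : ℕ∞) psi (Ioi (-1)) := contDiffOn_psi.of_le le_top
  refine ⟨strictMonoOn_phi.mono Ioi_subset_Ici_self, bijOn_phi, psi, invOn_psi.1,
    fun y hy => ⟨mapsTo_psi hy, invOn_psi.2 hy⟩, hpsi_smooth, ?_, ?_, ?_⟩
  · have hmaps : MapsTo (fun p : ℝ × ℝ => -(p.1 * p.2)) {p | p.1 * p.2 < 1} (Ioi (-1)) :=
      fun p (hp : p.1 * p.2 < 1) => show -1 < -(p.1 * p.2) by linarith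
    exact contDiffOn_const.mul
      (hpsi_smooth.comp (contDiff_fst.mul contDiff_snd).neg.contDiffOn hmaps)
  · intro U V hU hV
    have hUV : 0 ≤ -(U * V) := by nlinarith
    have hy : -1 < -(U * V) := by linarith
    rw [le_mul_iff_one_le_right h2M, mul_eq_left₀ h2M.ne', one_le_psi_iff hy, psi_eq_one_iff hy]
    simp [hUV, hV.ne']
  · intro u v
    obtain ⟨hr_gt, hr_eq⟩ := hr u v
    have hkruskal : -(-exp (-u / (2 * M)) * exp (v / (2 * M))) = exp ((v - u) / (2 * M)) := by
      rw [neg_mul, neg_neg, ← exp_add]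
      ring_nf
    rw [hkruskal, hr_eq, div_div_mul_exp_eq_phi h2M.ne' (by linarith),
      invOn_psi.1 (div_pos (by linarith) h2M)]
    field_simp
end

section
/- Let M > 0, p ≥ 0 and P > 2p be real numbers, and let u₀ ≤ u₁. Let τ, r : [u₀,u₁] → ℝ be C¹ with τ nondecreasing, r(u) ≥ 2M and |r′(u)| ≤ 2τ′(u) for all u, and let Ω² : [u₀,u₁] → ℝ be continuous with 0 ≤ Ω²(u) ≤ 2τ′(u) for all u. Then for every continuous Δ : [u₀,u₁] → ℝ satisfying |Δ(u)| ≤ e^{−Pτ(u)/(2M)}·(2M/r(u))^p for all u, one has ∫_{u₀}^{u₁} |Δ(u)|·Ω²(u) du ≤ (4M/(P−2p))·e^{−Pτ(u₀)/(2M)}·(2M/r(u₀))^p. In particular the bound is independent of u₁. -/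
/-!
The weight `w = e^{-Pτ/(2M)} (2M/r)^p` decays along the cone at logarithmic rate
`Pτ'/(2M) + p r'/r`, and since `r ≥ 2M` and `|r'| ≤ 2τ'` this rate is at least
`(P - 2p) τ'/(2M)`. Hence `|Δ| Ω² ≤ 2τ' w ≤ -(4M/(P - 2p)) w'`, and integrating gives
`∫ |Δ| Ω² ≤ (4M/(P - 2p)) (w(u₀) - w(u₁)) ≤ (4M/(P - 2p)) w(u₀)`.
-/

open Real Set

noncomputable def decayWeight (M P p : ℝ) (τ r : ℝ → ℝ) (u : ℝ) : ℝ :=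
  exp (-(P * τ u) / (2 * M)) * (2 * M / r u) ^ p

section DecayWeight

variable {M P p : ℝ} {τ r : ℝ → ℝ}

lemma decayWeight_pos (hM : 0 < M) {u : ℝ} (hr : 0 < r u) : 0 < decayWeight M P p τ r u := by
  unfold decayWeight
  positivity

lemma hasDerivAt_decayWeight (hM : M ≠ 0) {τ' r' u : ℝ} (hτ : HasDerivAt τ τ' u)
    (hr : HasDerivAt r r' u) (hr₀ : 0 < r u) :
    HasDerivAt (decayWeight M P p τ r)
      (-decayWeight M P p τ r u * (P * τ' / (2 * M) + p * (r' / r u))) u := by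
  have hexp := ((hτ.const_mul P).neg.div_const (2 * M)).exp
  have hbase : 2 * M / r u ≠ 0 := div_ne_zero (mul_ne_zero two_ne_zero hM) hr₀.ne'
  have hpow := ((hasDerivAt_const u (2 * M)).div hr hr₀.ne').rpow_const (p := p) (Or.inl hbase)
  refine (hexp.mul hpow).congr_deriv ?_
  simp only [Pi.neg_apply, Pi.div_apply]
  rw [rpow_sub_one hbase]
  unfold decayWeight
  field_simp
  ring

end DecayWeight

lemma neg_div_le_div_of_abs_le {M r τ' r' : ℝ} (hM : 0 < M) (hr : 2 * M ≤ r)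
    (hr' : |r'| ≤ 2 * τ') : -τ' / M ≤ r' / r := by
  have hr₀ : 0 < r := by linarith
  rw [div_le_div_iff₀ hM hr₀]
  nlinarith [neg_abs_le r', abs_nonneg r']

/-- The radial weight `(2M/r)^p` costs at most `2p` of the exponential decay rate `P`. -/
lemma two_mul_le_mul_decayRate {M p P r τ' r' : ℝ} (hM : 0 < M) (hp : 0 ≤ p) (hP : 2 * p < P)
    (hr : 2 * M ≤ r) (hr' : |r'| ≤ 2 * τ') :
    2 * τ' ≤ 4 * M / (P - 2 * p) * (P * τ' / (2 * M) + p * (r' / r)) := by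
  have hPp : 0 < P - 2 * p := by linarith
  have hrate : (P - 2 * p) * τ' / (2 * M) ≤ P * τ' / (2 * M) + p * (r' / r) := by
    have := mul_le_mul_of_nonneg_left (neg_div_le_div_of_abs_le hM hr hr') hp
    have heq : (P - 2 * p) * τ' / (2 * M) = P * τ' / (2 * M) + p * (-τ' / M) := by
      field_simp
      ring
    linarith
  calc 2 * τ' = 4 * M / (P - 2 * p) * ((P - 2 * p) * τ' / (2 * M)) := by
        field_simp; ring
    _ ≤ _ := mul_le_mul_of_nonneg_left hrate (by positivity)

theorem stmt_6_general (M p P : ℝ) (hM : 0 < M) (hp : 0 ≤ p) (hP : 2 * p < P)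
    (u₀ u₁ : ℝ) (hu : u₀ ≤ u₁)
    (τ r Ωsq Δ τ' r' : ℝ → ℝ)
    (hτd : ∀ u ∈ Set.Icc u₀ u₁, HasDerivAt τ (τ' u) u)
    (hrd : ∀ u ∈ Set.Icc u₀ u₁, HasDerivAt r (r' u) u)
    (hr2M : ∀ u ∈ Set.Icc u₀ u₁, 2 * M ≤ r u)
    (hrτ : ∀ u ∈ Set.Icc u₀ u₁, |r' u| ≤ 2 * τ' u)
    (hΩc : ContinuousOn Ωsq (Set.Icc u₀ u₁))
    (hΩ : ∀ u ∈ Set.Icc u₀ u₁, 0 ≤ Ωsq u ∧ Ωsq u ≤ 2 * τ' u)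
    (hΔc : ContinuousOn Δ (Set.Icc u₀ u₁))
    (hΔ : ∀ u ∈ Set.Icc u₀ u₁,
      |Δ u| ≤ Real.exp (-(P * τ u) / (2 * M)) * (2 * M / r u) ^ p) :
    ∫ u in u₀..u₁, |Δ u| * Ωsq u ≤
      (4 * M / (P - 2 * p)) * Real.exp (-(P * τ u₀) / (2 * M)) * (2 * M / r u₀) ^ p := by
  set C := 4 * M / (P - 2 * p)
  set w := decayWeight M P p τ r
  have hr₀ : ∀ u ∈ Icc u₀ u₁, 0 < r u := fun u hu' => by linarith [hr2M u hu']
  have hw' : ∀ u ∈ Icc u₀ u₁, HasDerivAt (fun u => -(C * w u))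
      (-(C * (-w u * (P * τ' u / (2 * M) + p * (r' u / r u))))) u := fun u hu' =>
    ((hasDerivAt_decayWeight hM.ne' (hτd u hu') (hrd u hu') (hr₀ u hu')).const_mul C).neg
  have hbound : ∀ u ∈ Icc u₀ u₁,
      |Δ u| * Ωsq u ≤ -(C * (-w u * (P * τ' u / (2 * M) + p * (r' u / r u)))) := by
    intro u hu'
    have hwu : 0 < w u := decayWeight_pos hM (hr₀ u hu')
    calc |Δ u| * Ωsq u ≤ w u * (2 * τ' u) :=
          mul_le_mul (hΔ u hu') (hΩ u hu').2 (hΩ u hu').1 hwu.le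
      _ ≤ w u * (C * (P * τ' u / (2 * M) + p * (r' u / r u))) :=
          mul_le_mul_of_nonneg_left
            (two_mul_le_mul_decayRate hM hp hP (hr2M u hu') (hrτ u hu')) hwu.le
      _ = _ := by ring
  have hint := intervalIntegral.integral_le_sub_of_hasDeriv_right_of_le hu
    (fun u hu' => (hw' u hu').continuousAt.continuousWithinAt)
    (fun u hu' => (hw' u (Ioo_subset_Icc_self hu')).hasDerivWithinAt)
    ((hΔc.abs.mul hΩc).integrableOn_compact isCompact_Icc)
    (fun u hu' => hbound u (Ioo_subset_Icc_self hu'))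
  have hC : 0 < C := div_pos (by linarith) (by linarith)
  have hw₁ : 0 < w u₁ := decayWeight_pos hM (hr₀ u₁ (right_mem_Icc.2 hu))
  calc ∫ u in u₀..u₁, |Δ u| * Ωsq u ≤ -(C * w u₁) - -(C * w u₀) := hint
    _ ≤ C * w u₀ := by linarith [mul_pos hC hw₁]
    _ = _ := mul_assoc _ _ _ |>.symm

/-- Lemma 8.1 of the paper, backward integration in the ingoing
null direction. Under the stated C¹ hypotheses on τ, r, the bounds
r ≥ 2M, |r′| ≤ 2τ′, 0 ≤ Ω² ≤ 2τ′ and the pointwise decay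
|Δ(u)| ≤ e^{−Pτ(u)/(2M)}·(2M/r(u))^p with P > 2p ≥ 0, one has
∫_{u₀}^{u₁} |Δ|·Ω² du ≤ (4M/(P−2p))·e^{−Pτ(u₀)/(2M)}·(2M/r(u₀))^p,
uniformly in u₁. -/
theorem stmt_6 (M p P : ℝ) (hM : 0 < M) (hp : 0 ≤ p) (hP : 2 * p < P)
    (u₀ u₁ : ℝ) (hu : u₀ ≤ u₁)
    (τ r Ωsq Δ τ' r' : ℝ → ℝ)
    (hτd : ∀ u ∈ Set.Icc u₀ u₁, HasDerivAt τ (τ' u) u)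
    (hrd : ∀ u ∈ Set.Icc u₀ u₁, HasDerivAt r (r' u) u)
    (hτ'c : ContinuousOn τ' (Set.Icc u₀ u₁))
    (hr'c : ContinuousOn r' (Set.Icc u₀ u₁))
    (hτmono : MonotoneOn τ (Set.Icc u₀ u₁))
    (hr2M : ∀ u ∈ Set.Icc u₀ u₁, 2 * M ≤ r u)
    (hrτ : ∀ u ∈ Set.Icc u₀ u₁, |r' u| ≤ 2 * τ' u)
    (hΩc : ContinuousOn Ωsq (Set.Icc u₀ u₁))
    (hΩ : ∀ u ∈ Set.Icc u₀ u₁, 0 ≤ Ωsq u ∧ Ωsq u ≤ 2 * τ' u)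
    (hΔc : ContinuousOn Δ (Set.Icc u₀ u₁))
    (hΔ : ∀ u ∈ Set.Icc u₀ u₁,
      |Δ u| ≤ Real.exp (-(P * τ u) / (2 * M)) * (2 * M / r u) ^ p) :
    ∫ u in u₀..u₁, |Δ u| * Ωsq u ≤
      (4 * M / (P - 2 * p)) * Real.exp (-(P * τ u₀) / (2 * M)) * (2 * M / r u₀) ^ p :=
  stmt_6_general M p P hM hp hP u₀ u₁ hu τ r Ωsq Δ τ' r' hτd hrd hr2M hrτ hΩc hΩ hΔc hΔ
end

section
/- Let M > 0, P > 0, p ≥ 0 be real numbers and let 1 < h ≤ h̃ ≤ 2. Let v₀ ≤ v₁ and let τ, r : [v₀,v₁] → ℝ be C¹ with τ′(v) ≥ (1/(2·4^h))·(2M/r(v))^h for all v, and with r nondecreasing and r(v) ≥ 2M for all v. Then for every continuous Δ : [v₀,v₁] → ℝ satisfying |Δ(v)| ≤ e^{−Pτ(v)/(2M)}·(2M/r(v))^p for all v, one has ∫_{v₀}^{v₁} (M^{h̃−1}/r(v)^{h̃})·|Δ(v)| dv ≤ (2·4^h/P)·(2M/r(v₀))^p·e^{−Pτ(v₀)/(2M)}.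 -/
/-!
Since `r ≥ 2M`, the weight `M^(h̃-1) / r^h̃` is at most `(2M/r)^h / (2M)`, and the lower bound on
`τ'` turns this into `2·4^h τ' / (2M)`. Together with the decay of `Δ` and `r ≥ r(v₀)`, the
integrand is dominated by the derivative of `-(2·4^h/P)(2M/r(v₀))^p e^{-Pτ/(2M)}`, so the
integral is bounded by the value of this exponential at `v₀`.
-/

open Set Real MeasureTheory

lemma rpow_sub_one_div_rpow_le {M b h h' : ℝ} (hM : 0 < M) (hb : M ≤ b) (hh : 1 ≤ h)
    (hhh : h ≤ h') : M ^ (h' - 1) / b ^ h' ≤ (2 * M / b) ^ h / (2 * M) := by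
  have hb0 : 0 < b := hM.trans_le hb
  calc M ^ (h' - 1) / b ^ h' = (M / b) ^ h' / M := by
        rw [div_rpow hM.le hb0.le, rpow_sub_one hM.ne']
        field_simp
    _ ≤ (M / b) ^ h / M := by
        gcongr (?_ : ℝ) / M
        exact rpow_le_rpow_of_exponent_ge (by positivity) ((div_le_one hb0).2 hb) hhh
    _ ≤ 2 ^ (h - 1) * (M / b) ^ h / M := by
        gcongr
        exact le_mul_of_one_le_left (by positivity) (one_le_rpow (by norm_num) (by linarith))
    _ = (2 * M / b) ^ h / (2 * M) := by
        rw [mul_div_assoc 2 M b, mul_rpow (by norm_num) (by positivity), rpow_sub_one two_ne_zero]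
        field_simp

lemma weight_mul_abs_le {M P p h h' r r₀ t d E : ℝ} (hM : 0 < M) (hP : 0 < P) (hp : 0 ≤ p)
    (hh : 1 ≤ h) (hhh : h ≤ h') (hr₀ : 0 < r₀) (hr₀r : r₀ ≤ r) (hr : 2 * M ≤ r)
    (ht : 1 / (2 * (4 : ℝ) ^ h) * (2 * M / r) ^ h ≤ t) (hd : |d| ≤ E * (2 * M / r) ^ p)
    (hE : 0 ≤ E) :
    M ^ (h' - 1) / r ^ h' * |d| ≤ 2 * 4 ^ h / P * (2 * M / r₀) ^ p * (P * t / (2 * M)) * E := by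
  have hr0 : 0 < r := by linarith
  have ht0 : 0 ≤ t := le_trans (by positivity) ht
  have hweight : M ^ (h' - 1) / r ^ h' ≤ 2 * 4 ^ h * t / (2 * M) := by
    refine (rpow_sub_one_div_rpow_le hM (by linarith) hh hhh).trans ?_
    gcongr
    rwa [div_mul_eq_mul_div, one_mul, div_le_iff₀' (by positivity)] at ht
  have hdecay : |d| ≤ E * (2 * M / r₀) ^ p := by
    refine hd.trans ?_
    gcongr
  calc M ^ (h' - 1) / r ^ h' * |d| ≤ 2 * 4 ^ h * t / (2 * M) * (E * (2 * M / r₀) ^ p) := by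
        gcongr
    _ = 2 * 4 ^ h / P * (2 * M / r₀) ^ p * (P * t / (2 * M)) * E := by
        field_simp

lemma integral_le_mul_exp_of_le_neg_deriv {f φ φ' : ℝ → ℝ} {a b K : ℝ} (hab : a ≤ b)
    (hK : 0 ≤ K) (hφc : ContinuousOn φ (Icc a b)) (hφ : ∀ x ∈ Ioo a b, HasDerivAt φ (φ' x) x)
    (hf : IntervalIntegrable f volume a b) (hfφ : ∀ x ∈ Ioo a b, f x ≤ -(K * φ' x * exp (φ x))) :
    ∫ x in a..b, f x ≤ K * exp (φ a) := by
  have hFTC : ∫ x in a..b, f x ≤ -(K * exp (φ b)) - -(K * exp (φ a)) :=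
    intervalIntegral.integral_le_sub_of_hasDeriv_right_of_le hab
      (continuousOn_const.mul hφc.rexp).neg
      (fun x hx ↦ (((hφ x hx).exp.const_mul K).neg.hasDerivWithinAt).congr_deriv (by ring))
      ((intervalIntegrable_iff_integrableOn_Icc_of_le hab).1 hf) hfφ
  have : 0 ≤ K * exp (φ b) := by positivity
  linarith

theorem stmt_7_general (M P p h h' : ℝ) (hM : 0 < M) (hP : 0 < P) (hp : 0 ≤ p)
    (hh1 : 1 < h) (hhh : h ≤ h')
    (v₀ v₁ : ℝ) (hv : v₀ ≤ v₁)
    (τ r Δ τ' : ℝ → ℝ)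
    (hτd : ∀ v ∈ Set.Icc v₀ v₁, HasDerivAt τ (τ' v) v)
    (hτ' : ∀ v ∈ Set.Icc v₀ v₁,
      (1 / (2 * (4 : ℝ) ^ h)) * (2 * M / r v) ^ h ≤ τ' v)
    (hrmono : MonotoneOn r (Set.Icc v₀ v₁))
    (hr2M : ∀ v ∈ Set.Icc v₀ v₁, 2 * M ≤ r v)
    (hΔc : ContinuousOn Δ (Set.Icc v₀ v₁))
    (hΔ : ∀ v ∈ Set.Icc v₀ v₁,
      |Δ v| ≤ Real.exp (-(P * τ v) / (2 * M)) * (2 * M / r v) ^ p) :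
    ∫ v in v₀..v₁, (M ^ (h' - 1) / r v ^ h') * |Δ v| ≤
      (2 * (4 : ℝ) ^ h / P) * (2 * M / r v₀) ^ p *
        Real.exp (-(P * τ v₀) / (2 * M)) := by
  have hv₀ : v₀ ∈ Icc v₀ v₁ := left_mem_Icc.2 hv
  have hr_pos : ∀ v ∈ Icc v₀ v₁, 0 < r v := fun v hvI ↦ by linarith [hr2M v hvI]
  have hweight : AntitoneOn (fun v ↦ M ^ (h' - 1) / r v ^ h') (uIcc v₀ v₁) := by
    rw [uIcc_of_le hv]
    intro x hx y hy hxy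
    have hrx := hr_pos x hx
    dsimp only
    gcongr M ^ (h' - 1) / ?_
    exact rpow_le_rpow hrx.le (hrmono hx hy hxy) (by linarith)
  have hr₀ := hr_pos v₀ hv₀
  refine integral_le_mul_exp_of_le_neg_deriv (φ := fun v ↦ -(P * τ v) / (2 * M))
    (φ' := fun v ↦ -(P * τ' v) / (2 * M)) hv (by positivity)
    (fun v hvI ↦ (hτd v hvI).continuousAt.continuousWithinAt.const_mul P |>.neg.div_const _)
    (fun v hvI ↦ ((hτd v (Ioo_subset_Icc_self hvI)).const_mul P).neg.div_const (2 * M))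
    (hweight.intervalIntegrable.mul_continuousOn (by rw [uIcc_of_le hv]; exact hΔc.abs))
    fun v hvI ↦ ?_
  replace hvI := Ioo_subset_Icc_self hvI
  convert weight_mul_abs_le hM hP hp hh1.le hhh hr₀ (hrmono hv₀ hvI hvI.1) (hr2M v hvI)
    (hτ' v hvI) (hΔ v hvI) (exp_pos _).le using 1
  ring

/-- estimate (8.4) of Lemma 8.2, backward integration in the
outgoing null direction with extra radial weight r^{−h̃}, h ≤ h̃ ≤ 2. -/
theorem stmt_7 (M P p h h' : ℝ) (hM : 0 < M) (hP : 0 < P) (hp : 0 ≤ p)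
    (hh1 : 1 < h) (hhh : h ≤ h') (hh2 : h' ≤ 2)
    (v₀ v₁ : ℝ) (hv : v₀ ≤ v₁)
    (τ r Δ τ' r' : ℝ → ℝ)
    (hτd : ∀ v ∈ Set.Icc v₀ v₁, HasDerivAt τ (τ' v) v)
    (hrd : ∀ v ∈ Set.Icc v₀ v₁, HasDerivAt r (r' v) v)
    (hτ'c : ContinuousOn τ' (Set.Icc v₀ v₁))
    (hr'c : ContinuousOn r' (Set.Icc v₀ v₁))
    (hτ' : ∀ v ∈ Set.Icc v₀ v₁,
      (1 / (2 * (4 : ℝ) ^ h)) * (2 * M / r v) ^ h ≤ τ' v)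
    (hrmono : MonotoneOn r (Set.Icc v₀ v₁))
    (hr2M : ∀ v ∈ Set.Icc v₀ v₁, 2 * M ≤ r v)
    (hΔc : ContinuousOn Δ (Set.Icc v₀ v₁))
    (hΔ : ∀ v ∈ Set.Icc v₀ v₁,
      |Δ v| ≤ Real.exp (-(P * τ v) / (2 * M)) * (2 * M / r v) ^ p) :
    ∫ v in v₀..v₁, (M ^ (h' - 1) / r v ^ h') * |Δ v| ≤
      (2 * (4 : ℝ) ^ h / P) * (2 * M / r v₀) ^ p *
        Real.exp (-(P * τ v₀) / (2 * M)) :=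
  stmt_7_general M P p h h' hM hP hp hh1 hhh v₀ v₁ hv τ r Δ τ' hτd hτ' hrmono hr2M hΔc hΔ
end

section
/- Let M > 0, P > 0 and p > 0 be real numbers, and let v₀ ≤ v₁. Let τ, r : [v₀,v₁] → ℝ be C¹ with τ nondecreasing, r nondecreasing and r(v) ≥ 2M for all v; assume moreover that r′(v) ≥ 1/2 at every v with r(v) ≥ 8M, and that τ′(v) ≥ 1/2 at every v with r(v) ≤ 8M. Then for every continuous Δ : [v₀,v₁] → ℝ satisfying |Δ(v)| ≤ e^{−Pτ(v)/(2M)}·(2M/r(v))^p for all v, one has ∫_{v₀}^{v₁} (1/r(v))·|Δ(v)| dv ≤ (2/p + 4/P)·(2M/r(v₀))^p·e^{−Pτ(v₀)/(2M)}. -/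
/-!
The integrand is dominated by `-G'` for `G = (2/p) E(v₀) X + (4/P) X(v₀) E`, where
`E = exp (-P τ / 2M)` and `X = (2M / r)^p` are both nonincreasing. Where `r ≥ 8M`, `r' ≥ 1/2`
gives `E X / r ≤ 2 E(v₀) X r' / r = -(2/p) E(v₀) X'`; where `r ≤ 8M`, `1 / r ≤ 1 / 2M` and
`τ' ≥ 1/2` give `E X / r ≤ X(v₀) E / 2M ≤ -(4/P) X(v₀) E'`. Integrating,
`∫ ≤ G(v₀) - G(v₁) ≤ G(v₀)`. Without the factor `X` the far region would contribute the
divergent `∫ dr / r`.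
-/

open Set MeasureTheory

lemma HasDerivAt.nonneg_of_monotoneOn_of_mem_interior {f : ℝ → ℝ} {f' x : ℝ} {s : Set ℝ}
    (hf : HasDerivAt f f' x) (hx : x ∈ interior s) (hmono : MonotoneOn f s) : 0 ≤ f' :=
  hf.hasDerivWithinAt.nonneg_of_monotoneOn (isOpen_interior.preperfect x hx)
    (hmono.mono interior_subset)

lemma HasDerivAt.div_rpow_const {f : ℝ → ℝ} {f' c p x : ℝ} (hf : HasDerivAt f f' x)
    (hfx : f x ≠ 0) (hc : c ≠ 0) :
    HasDerivAt (fun y => (c / f y) ^ p) (-(p * (c / f x) ^ p * f' / f x)) x := by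
  have hquot : HasDerivAt (fun y => c / f y) (c * -(f' / f x ^ 2)) x := by
    simpa [div_eq_mul_inv] using (hf.inv hfx).const_mul c
  refine (hquot.rpow_const (Or.inl (div_ne_zero hc hfx))).congr_deriv ?_
  rw [Real.rpow_sub_one (div_ne_zero hc hfx)]
  field_simp

lemma hasDerivAt_neg_borderline_weight {τ r : ℝ → ℝ} {M P p a b τ' r' v : ℝ}
    (hτ : HasDerivAt τ τ' v) (hr : HasDerivAt r r' v) (hrv : r v ≠ 0) (hM : M ≠ 0)
    (hP : P ≠ 0) (hp : p ≠ 0) :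
    HasDerivAt
      (fun w => -((2 / p) * a * (2 * M / r w) ^ p + (4 / P) * b * Real.exp (-(P * τ w) / (2 * M))))
      (2 * a * (2 * M / r v) ^ p * r' / r v + 2 * b * Real.exp (-(P * τ v) / (2 * M)) * τ' / M)
      v := by
  have hE : HasDerivAt (fun w => Real.exp (-(P * τ w) / (2 * M)))
      (Real.exp (-(P * τ v) / (2 * M)) * (-(P * τ') / (2 * M))) v :=
    ((hτ.const_mul P).neg.div_const (2 * M)).exp
  have hX := hr.div_rpow_const (p := p) hrv (mul_ne_zero two_ne_zero hM)
  refine ((hX.const_mul ((2 / p) * a)).add (hE.const_mul ((4 / P) * b))).neg.congr_deriv ?_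
  field_simp
  ring

lemma antitoneOn_exp_neg_mul_div {τ : ℝ → ℝ} {s : Set ℝ} {P c : ℝ} (hP : 0 ≤ P) (hc : 0 ≤ c)
    (hτ : MonotoneOn τ s) : AntitoneOn (fun v => Real.exp (-(P * τ v) / c)) s :=
  fun _ ha _ hb hab => by
    have := hτ ha hb hab
    dsimp only
    gcongr

lemma antitoneOn_div_rpow {r : ℝ → ℝ} {s : Set ℝ} {c p : ℝ} (hc : 0 ≤ c) (hp : 0 ≤ p)
    (hr : ∀ v ∈ s, 0 < r v) (hmono : MonotoneOn r s) : AntitoneOn (fun v => (c / r v) ^ p) s :=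
  fun a ha b hb hab => by
    have := hr a ha
    have := hr b hb
    have := hmono ha hb hab
    dsimp only
    gcongr

lemma borderline_integrand_le {M r r' τ' D E E₀ X X₀ : ℝ} (hM : 0 < M) (hr : 2 * M ≤ r)
    (hD : D ≤ E * X) (hE : 0 ≤ E) (hEE₀ : E ≤ E₀) (hX : 0 ≤ X) (hXX₀ : X ≤ X₀) (hr' : 0 ≤ r')
    (hτ' : 0 ≤ τ') (hfar : 8 * M ≤ r → 1 / 2 ≤ r') (hnear : r ≤ 8 * M → 1 / 2 ≤ τ') :
    1 / r * D ≤ 2 * E₀ * X * r' / r + 2 * X₀ * E * τ' / M := by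
  have hr₀ : 0 < r := by linarith
  have hE₀ : 0 ≤ E₀ := hE.trans hEE₀
  have hX₀ : 0 ≤ X₀ := hX.trans hXX₀
  have hDr : 1 / r * D ≤ E * X / r := by rw [one_div_mul_eq_div]; gcongr
  rcases le_total (8 * M) r with hrM | hrM
  · have hnear_term : 0 ≤ 2 * X₀ * E * τ' / M := by positivity
    have hfar_bound : E * X / r ≤ 2 * E₀ * X * r' / r := by
      refine div_le_div_of_nonneg_right ?_ hr₀.le
      calc E * X ≤ E₀ * X := by gcongr
        _ = 2 * E₀ * X * (1 / 2) := by ring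
        _ ≤ 2 * E₀ * X * r' := by gcongr; exact hfar hrM
    linarith
  · have hfar_term : 0 ≤ 2 * E₀ * X * r' / r := by positivity
    have hnear_bound : E * X / r ≤ 2 * X₀ * E * τ' / M :=
      calc E * X / r ≤ E * X₀ / (2 * M) := by gcongr
        _ = 2 * X₀ * E * (1 / 4) / M := by field_simp; ring
        _ ≤ 2 * X₀ * E * τ' / M := by gcongr; linarith [hnear hrM]
    linarith

theorem stmt_8_general (M P p : ℝ) (hM : 0 < M) (hP : 0 < P) (hp : 0 < p)
    (v₀ v₁ : ℝ) (hv : v₀ ≤ v₁)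
    (τ r Δ τ' r' : ℝ → ℝ)
    (hτd : ∀ v ∈ Set.Icc v₀ v₁, HasDerivAt τ (τ' v) v)
    (hrd : ∀ v ∈ Set.Icc v₀ v₁, HasDerivAt r (r' v) v)
    (hτmono : MonotoneOn τ (Set.Icc v₀ v₁))
    (hrmono : MonotoneOn r (Set.Icc v₀ v₁))
    (hr2M : ∀ v ∈ Set.Icc v₀ v₁, 2 * M ≤ r v)
    (hr' : ∀ v ∈ Set.Icc v₀ v₁, 8 * M ≤ r v → 1 / 2 ≤ r' v)
    (hτ' : ∀ v ∈ Set.Icc v₀ v₁, r v ≤ 8 * M → 1 / 2 ≤ τ' v)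
    (hΔc : ContinuousOn Δ (Set.Icc v₀ v₁))
    (hΔ : ∀ v ∈ Set.Icc v₀ v₁,
      |Δ v| ≤ Real.exp (-(P * τ v) / (2 * M)) * (2 * M / r v) ^ p) :
    ∫ v in v₀..v₁, (1 / r v) * |Δ v| ≤
      (2 / p + 4 / P) * (2 * M / r v₀) ^ p * Real.exp (-(P * τ v₀) / (2 * M)) := by
  set E : ℝ → ℝ := fun v => Real.exp (-(P * τ v) / (2 * M))
  set X : ℝ → ℝ := fun v => (2 * M / r v) ^ p
  set G : ℝ → ℝ := fun v => (2 / p) * E v₀ * X v + (4 / P) * X v₀ * E v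
  have hv₀ : v₀ ∈ Icc v₀ v₁ := left_mem_Icc.2 hv
  have hrpos : ∀ v ∈ Icc v₀ v₁, 0 < r v := fun v hv => by linarith [hr2M v hv]
  have hX : ∀ v ∈ Icc v₀ v₁, 0 ≤ X v := fun v hv => by have := hrpos v hv; positivity
  have hE_anti : AntitoneOn E (Icc v₀ v₁) :=
    antitoneOn_exp_neg_mul_div hP.le (by positivity) hτmono
  have hX_anti : AntitoneOn X (Icc v₀ v₁) :=
    antitoneOn_div_rpow (by positivity) hp.le hrpos hrmono
  have hG : ∀ v ∈ Icc v₀ v₁, HasDerivAt (fun w => -G w)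
      (2 * E v₀ * X v * r' v / r v + 2 * X v₀ * E v * τ' v / M) v := fun v hv =>
    hasDerivAt_neg_borderline_weight (hτd v hv) (hrd v hv) (hrpos v hv).ne' hM.ne' hP.ne' hp.ne'
  have hbound : ∀ v ∈ Ioo v₀ v₁, 1 / r v * |Δ v| ≤
      2 * E v₀ * X v * r' v / r v + 2 * X v₀ * E v * τ' v / M := fun v hvo =>
    have hv := Ioo_subset_Icc_self hvo
    have hint : v ∈ interior (Icc v₀ v₁) := by rwa [interior_Icc]
    borderline_integrand_le hM (hr2M v hv) (hΔ v hv) (Real.exp_pos _).le (hE_anti hv₀ hv hv.1)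
      (hX v hv) (hX_anti hv₀ hv hv.1)
      ((hrd v hv).nonneg_of_monotoneOn_of_mem_interior hint hrmono)
      ((hτd v hv).nonneg_of_monotoneOn_of_mem_interior hint hτmono) (hr' v hv) (hτ' v hv)
  have hGv₁ : 0 ≤ G v₁ := by
    have := hX v₁ (right_mem_Icc.2 hv); have := hX v₀ hv₀; positivity
  have hf_int : IntegrableOn (fun v => 1 / r v * |Δ v|) (Icc v₀ v₁) :=
    ((continuousOn_const.div (fun v hv => (hrd v hv).continuousAt.continuousWithinAt)
      fun v hv => (hrpos v hv).ne').mul hΔc.abs).integrableOn_Icc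
  calc ∫ v in v₀..v₁, 1 / r v * |Δ v|
      ≤ -G v₁ - -G v₀ :=
        intervalIntegral.integral_le_sub_of_hasDeriv_right_of_le hv
          (fun v hv => (hG v hv).continuousAt.continuousWithinAt)
          (fun v hv => (hG v (Ioo_subset_Icc_self hv)).hasDerivWithinAt) hf_int hbound
    _ ≤ G v₀ := by linarith
    _ = _ := by ring

/-- estimate (8.5) of Lemma 8.2, borderline backward integration
in the outgoing null direction with only a 1/r weight; the positive radial
weight p > 0 of Δ saves the borderline term. -/
theorem stmt_8 (M P p : ℝ) (hM : 0 < M) (hP : 0 < P) (hp : 0 < p)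
    (v₀ v₁ : ℝ) (hv : v₀ ≤ v₁)
    (τ r Δ τ' r' : ℝ → ℝ)
    (hτd : ∀ v ∈ Set.Icc v₀ v₁, HasDerivAt τ (τ' v) v)
    (hrd : ∀ v ∈ Set.Icc v₀ v₁, HasDerivAt r (r' v) v)
    (hτ'c : ContinuousOn τ' (Set.Icc v₀ v₁))
    (hr'c : ContinuousOn r' (Set.Icc v₀ v₁))
    (hτmono : MonotoneOn τ (Set.Icc v₀ v₁))
    (hrmono : MonotoneOn r (Set.Icc v₀ v₁))
    (hr2M : ∀ v ∈ Set.Icc v₀ v₁, 2 * M ≤ r v)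
    (hr' : ∀ v ∈ Set.Icc v₀ v₁, 8 * M ≤ r v → 1 / 2 ≤ r' v)
    (hτ' : ∀ v ∈ Set.Icc v₀ v₁, r v ≤ 8 * M → 1 / 2 ≤ τ' v)
    (hΔc : ContinuousOn Δ (Set.Icc v₀ v₁))
    (hΔ : ∀ v ∈ Set.Icc v₀ v₁,
      |Δ v| ≤ Real.exp (-(P * τ v) / (2 * M)) * (2 * M / r v) ^ p) :
    ∫ v in v₀..v₁, (1 / r v) * |Δ v| ≤
      (2 / p + 4 / P) * (2 * M / r v₀) ^ p * Real.exp (-(P * τ v₀) / (2 * M)) :=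
  stmt_8_general M P p hM hP hp v₀ v₁ hv τ r Δ τ' r' hτd hrd hτmono hrmono hr2M hr' hτ' hΔc hΔ
end

section
/- Let κ ≥ 0, α > 0 and Q ≥ 0 be real numbers and let v₀ ≤ v₁. Let q : [v₀,v₁] → ℝ be continuous with 0 ≤ q(v) ≤ Q·e^{−αv} for all v, and let Φ : [v₀,v₁] → ℝ be twice continuously differentiable satisfying Φ″(v) − κ·Φ′(v) + q(v)·Φ(v) = 0 on [v₀,v₁], with terminal conditions Φ(v₁) = Φ₁ > 0 and Φ′(v₁) = 0. If (Q/(α(α+κ)))·e^{−αv₀} ≤ 1/2, then for all v ∈ [v₀,v₁]: Φ′(v) ≥ 0, Φ₁/2 ≤ Φ(v) ≤ Φ₁, and 0 ≤ Φ₁ − Φ(v) ≤ (Q·Φ₁/(α(α+κ)))·e^{−αv}. -/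
/-!
The integrating factor `e^{-κv}` turns the equation into `(e^{-κv} Φ')' = -e^{-κv} q Φ`. On any
interval `[a, v₁]` on which `Φ ≥ 0` this derivative is `≤ 0`, so `Φ'(v₁) = 0` forces `Φ' ≥ 0` and
hence `Φ ≤ Φ₁`; then `q Φ ≤ Q Φ₁ e^{-αv}`, and integrating twice back from `v₁` gives
`Φ' ≤ Q Φ₁ e^{-αv} / (α + κ)` and `Φ₁ - Φ ≤ Q Φ₁ e^{-αv} / (α (α + κ)) ≤ Φ₁ / 2`.
Positivity of `Φ` itself follows by continuity: at the last point where `Φ ≤ 0` these bounds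
would already give `Φ ≥ Φ₁ / 2`.
-/

open Set Real

theorem monotoneOn_Icc_of_hasDerivAt_nonneg {a b : ℝ} {f f' : ℝ → ℝ}
    (hf : ∀ x ∈ Icc a b, HasDerivAt f (f' x) x) (hf' : ∀ x ∈ Ioo a b, 0 ≤ f' x) :
    MonotoneOn f (Icc a b) :=
  monotoneOn_of_hasDerivWithinAt_nonneg (convex_Icc a b)
    (fun x hx => (hf x hx).continuousAt.continuousWithinAt)
    (by simpa only [interior_Icc] using fun x hx => (hf x (Ioo_subset_Icc_self hx)).hasDerivWithinAt)
    (by simpa only [interior_Icc] using hf')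

theorem antitoneOn_Icc_of_hasDerivAt_nonpos {a b : ℝ} {f f' : ℝ → ℝ}
    (hf : ∀ x ∈ Icc a b, HasDerivAt f (f' x) x) (hf' : ∀ x ∈ Ioo a b, f' x ≤ 0) :
    AntitoneOn f (Icc a b) :=
  antitoneOn_of_hasDerivWithinAt_nonpos (convex_Icc a b)
    (fun x hx => (hf x hx).continuousAt.continuousWithinAt)
    (by simpa only [interior_Icc] using fun x hx => (hf x (Ioo_subset_Icc_self hx)).hasDerivWithinAt)
    (by simpa only [interior_Icc] using hf')

theorem hasDerivAt_exp_const_mul (c x : ℝ) :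
    HasDerivAt (fun v => exp (c * v)) (c * exp (c * x)) x :=
  ((hasDerivAt_id x).const_mul c).exp.congr_deriv (by simp only [id, mul_one, mul_comm])

theorem sub_le_of_neg_mul_exp_le_deriv {a b B r : ℝ} {f f' : ℝ → ℝ} (hr : 0 < r) (hB : 0 ≤ B)
    (hf : ∀ x ∈ Icc a b, HasDerivAt f (f' x) x)
    (hf' : ∀ x ∈ Ioo a b, -(B * exp (-r * x)) ≤ f' x) {v : ℝ} (hv : v ∈ Icc a b) :
    f v - f b ≤ B / r * exp (-r * v) := by
  have hg : ∀ x ∈ Icc a b, HasDerivAt (fun v => f v - B / r * exp (-r * v))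
      (f' x + B * exp (-r * x)) x := by
    intro x hx
    refine ((hf x hx).sub ((hasDerivAt_exp_const_mul (-r) x).const_mul (B / r))).congr_deriv ?_
    field_simp
    ring
  have hmono := monotoneOn_Icc_of_hasDerivAt_nonneg hg fun x hx => by linarith [hf' x hx]
  have hvb := hmono hv (right_mem_Icc.2 (hv.1.trans hv.2)) hv.2
  have : 0 ≤ B / r * exp (-r * b) := by positivity
  simp only at hvb
  linarith

theorem ContinuousOn.pos_of_nonneg_Ioo_imp_pos {a b : ℝ} {f : ℝ → ℝ}
    (hf : ContinuousOn f (Icc a b))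
    (h : ∀ c ∈ Icc a b, (∀ x ∈ Ioo c b, 0 ≤ f x) → 0 < f c) :
    ∀ x ∈ Icc a b, 0 < f x := by
  by_contra! hneg
  -- the largest point of `[a, b]` where `f ≤ 0` would contradict `h`
  set S := {x ∈ Icc a b | f x ≤ 0}
  have hS : IsCompact S :=
    isCompact_Icc.of_isClosed_subset (hf.preimage_isClosed_of_isClosed isClosed_Icc isClosed_Iic)
      (sep_subset _ _)
  have hm : sSup S ∈ S := hS.sSup_mem hneg
  refine (h _ hm.1 fun x hx => ?_).not_ge hm.2
  by_contra! hx0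
  exact hx.1.not_ge (le_csSup hS.bddAbove ⟨⟨hm.1.1.trans hx.1.le, hx.2.le⟩, hx0.le⟩)

namespace Raychaudhuri

variable {κ a b : ℝ} {q Φ Φ' Φ'' : ℝ → ℝ}

theorem hasDerivAt_exp_mul_deriv {x : ℝ} (hΦ' : HasDerivAt Φ' (Φ'' x) x)
    (hODE : Φ'' x - κ * Φ' x + q x * Φ x = 0) :
    HasDerivAt (fun v => exp (-κ * v) * Φ' v) (-(exp (-κ * x) * (q x * Φ x))) x :=
  ((hasDerivAt_exp_const_mul (-κ) x).mul hΦ').congr_deriv <| by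
    linear_combination exp (-κ * x) * hODE

theorem deriv_nonneg
    (hΦ'd : ∀ x ∈ Icc a b, HasDerivAt Φ' (Φ'' x) x)
    (hODE : ∀ x ∈ Icc a b, Φ'' x - κ * Φ' x + q x * Φ x = 0)
    (hq : ∀ x ∈ Ioo a b, 0 ≤ q x) (hΦ : ∀ x ∈ Ioo a b, 0 ≤ Φ x) (hend' : Φ' b = 0)
    {v : ℝ} (hv : v ∈ Icc a b) : 0 ≤ Φ' v := by
  have hanti := antitoneOn_Icc_of_hasDerivAt_nonpos
    (fun x hx => hasDerivAt_exp_mul_deriv (hΦ'd x hx) (hODE x hx)) fun x hx => by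
      have := mul_nonneg (hq x hx) (hΦ x hx)
      simp only [neg_nonpos]
      positivity
  have hvb := hanti hv (right_mem_Icc.2 (hv.1.trans hv.2)) hv.2
  simp only [hend', mul_zero] at hvb
  exact nonneg_of_mul_nonneg_right hvb (exp_pos _)

theorem le_terminal (hΦd : ∀ x ∈ Icc a b, HasDerivAt Φ (Φ' x) x)
    (hΦ' : ∀ x ∈ Icc a b, 0 ≤ Φ' x) {v : ℝ} (hv : v ∈ Icc a b) : Φ v ≤ Φ b :=
  monotoneOn_Icc_of_hasDerivAt_nonneg hΦd (fun x hx => hΦ' x (Ioo_subset_Icc_self hx))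
    hv (right_mem_Icc.2 (hv.1.trans hv.2)) hv.2

theorem deriv_le_mul_exp {α Q : ℝ} (hακ : 0 < α + κ) (hQ : 0 ≤ Q) (hΦb : 0 ≤ Φ b)
    (hΦ'd : ∀ x ∈ Icc a b, HasDerivAt Φ' (Φ'' x) x)
    (hODE : ∀ x ∈ Icc a b, Φ'' x - κ * Φ' x + q x * Φ x = 0)
    (hq : ∀ x ∈ Ioo a b, 0 ≤ q x ∧ q x ≤ Q * exp (-α * x))
    (hΦ : ∀ x ∈ Ioo a b, 0 ≤ Φ x ∧ Φ x ≤ Φ b) (hend' : Φ' b = 0)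
    {v : ℝ} (hv : v ∈ Icc a b) : Φ' v ≤ Q * Φ b / (α + κ) * exp (-α * v) := by
  have hexp (x : ℝ) : exp (-(α + κ) * x) = exp (-κ * x) * exp (-α * x) := by
    rw [← exp_add]; ring_nf
  have key := sub_le_of_neg_mul_exp_le_deriv hακ (mul_nonneg hQ hΦb)
    (fun x hx => hasDerivAt_exp_mul_deriv (hΦ'd x hx) (hODE x hx)) (fun x hx => by
      have hqΦ : q x * Φ x ≤ Q * exp (-α * x) * Φ b :=
        mul_le_mul (hq x hx).2 (hΦ x hx).2 (hΦ x hx).1 ((hq x hx).1.trans (hq x hx).2)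
      rw [hexp, neg_le_neg_iff]
      calc exp (-κ * x) * (q x * Φ x) ≤ exp (-κ * x) * (Q * exp (-α * x) * Φ b) := by gcongr
        _ = _ := by ring) hv
  simp only [hend', mul_zero, sub_zero, hexp] at key
  rw [← mul_le_mul_iff_of_pos_left (exp_pos (-κ * v))]
  linarith

theorem terminal_sub_le {α Q : ℝ} (hα : 0 < α) (hακ : 0 < α + κ) (hQ : 0 ≤ Q) (hΦb : 0 ≤ Φ b)
    (hΦd : ∀ x ∈ Icc a b, HasDerivAt Φ (Φ' x) x)
    (hΦ' : ∀ x ∈ Icc a b, Φ' x ≤ Q * Φ b / (α + κ) * exp (-α * x))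
    {v : ℝ} (hv : v ∈ Icc a b) : Φ b - Φ v ≤ Q * Φ b / (α * (α + κ)) * exp (-α * v) := by
  have key := sub_le_of_neg_mul_exp_le_deriv (f := fun x => -Φ x) hα (by positivity)
    (fun x hx => (hΦd x hx).neg) (fun x hx => neg_le_neg (hΦ' x (Ioo_subset_Icc_self hx))) hv
  rw [div_div, mul_comm (α + κ)] at key
  linarith

theorem bounds_of_nonneg {α Q : ℝ} (hα : 0 < α) (hακ : 0 < α + κ) (hQ : 0 ≤ Q) (hΦb : 0 ≤ Φ b)
    (hΦd : ∀ x ∈ Icc a b, HasDerivAt Φ (Φ' x) x)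
    (hΦ'd : ∀ x ∈ Icc a b, HasDerivAt Φ' (Φ'' x) x)
    (hODE : ∀ x ∈ Icc a b, Φ'' x - κ * Φ' x + q x * Φ x = 0)
    (hq : ∀ x ∈ Ioo a b, 0 ≤ q x ∧ q x ≤ Q * exp (-α * x))
    (hΦ : ∀ x ∈ Ioo a b, 0 ≤ Φ x) (hend' : Φ' b = 0) {v : ℝ} (hv : v ∈ Icc a b) :
    0 ≤ Φ' v ∧ Φ v ≤ Φ b ∧ Φ b - Φ v ≤ Q * Φ b / (α * (α + κ)) * exp (-α * v) := by
  have hΦ' : ∀ x ∈ Icc a b, 0 ≤ Φ' x := fun x hx =>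
    deriv_nonneg hΦ'd hODE (fun x hx => (hq x hx).1) hΦ hend' hx
  have hΦle : ∀ x ∈ Icc a b, Φ x ≤ Φ b := fun x hx => le_terminal hΦd hΦ' hx
  have hΦ'le : ∀ x ∈ Icc a b, Φ' x ≤ Q * Φ b / (α + κ) * exp (-α * x) := fun x hx =>
    deriv_le_mul_exp hακ hQ hΦb hΦ'd hODE hq
      (fun y hy => ⟨hΦ y hy, hΦle y (Ioo_subset_Icc_self hy)⟩) hend' hx
  exact ⟨hΦ' v hv, hΦle v hv, terminal_sub_le hα hακ hQ hΦb hΦd hΦ'le hv⟩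

end Raychaudhuri

theorem stmt_10_general (κ α Q Φ₁ : ℝ) (hκ : 0 ≤ κ) (hα : 0 < α) (hQ : 0 ≤ Q) (hΦ₁ : 0 < Φ₁)
    (v₀ v₁ : ℝ)
    (q Φ Φ' Φ'' : ℝ → ℝ)
    (hq : ∀ v ∈ Set.Icc v₀ v₁, 0 ≤ q v ∧ q v ≤ Q * Real.exp (-α * v))
    (hΦd : ∀ v ∈ Set.Icc v₀ v₁, HasDerivAt Φ (Φ' v) v)
    (hΦ'd : ∀ v ∈ Set.Icc v₀ v₁, HasDerivAt Φ' (Φ'' v) v)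
    (hODE : ∀ v ∈ Set.Icc v₀ v₁, Φ'' v - κ * Φ' v + q v * Φ v = 0)
    (hend : Φ v₁ = Φ₁) (hend' : Φ' v₁ = 0)
    (hsmall : (Q / (α * (α + κ))) * Real.exp (-α * v₀) ≤ 1 / 2) :
    ∀ v ∈ Set.Icc v₀ v₁,
      0 ≤ Φ' v ∧ Φ₁ / 2 ≤ Φ v ∧ Φ v ≤ Φ₁ ∧
      0 ≤ Φ₁ - Φ v ∧ Φ₁ - Φ v ≤ (Q * Φ₁ / (α * (α + κ))) * Real.exp (-α * v) := by
  have hακ : 0 < α + κ := by linarith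
  have hsub {a : ℝ} (ha : v₀ ≤ a) : Icc a v₁ ⊆ Icc v₀ v₁ := Icc_subset_Icc_left ha
  have hbounds {a : ℝ} (ha : v₀ ≤ a) (hΦ : ∀ x ∈ Ioo a v₁, 0 ≤ Φ x) {v : ℝ} (hv : v ∈ Icc a v₁) :
      0 ≤ Φ' v ∧ Φ v ≤ Φ₁ ∧ Φ₁ - Φ v ≤ Q * Φ₁ / (α * (α + κ)) * exp (-α * v) :=
    hend ▸ Raychaudhuri.bounds_of_nonneg hα hακ hQ (hend ▸ hΦ₁.le)
      (fun x hx => hΦd x (hsub ha hx)) (fun x hx => hΦ'd x (hsub ha hx))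
      (fun x hx => hODE x (hsub ha hx)) (fun x hx => hq x (hsub ha (Ioo_subset_Icc_self hx)))
      hΦ hend' hv
  have hdecay {v : ℝ} (hv : v ∈ Icc v₀ v₁) :
      Q * Φ₁ / (α * (α + κ)) * exp (-α * v) ≤ Φ₁ / 2 :=
    calc Q * Φ₁ / (α * (α + κ)) * exp (-α * v)
        = Φ₁ * (Q / (α * (α + κ)) * exp (-α * v)) := by ring
      _ ≤ Φ₁ * (Q / (α * (α + κ)) * exp (-α * v₀)) := by
          gcongr Φ₁ * (_ * ?_)
          exact exp_le_exp.2 (by nlinarith [hv.1])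
      _ ≤ Φ₁ * (1 / 2) := by gcongr
      _ = Φ₁ / 2 := by ring
  have hcont : ContinuousOn Φ (Icc v₀ v₁) := fun x hx =>
    (hΦd x hx).continuousAt.continuousWithinAt
  have hpos : ∀ x ∈ Icc v₀ v₁, 0 < Φ x := hcont.pos_of_nonneg_Ioo_imp_pos fun c hc hΦ => by
    linarith [(hbounds hc.1 hΦ (left_mem_Icc.2 hc.2)).2.2, hdecay hc]
  intro v hv
  obtain ⟨hΦ'v, hΦv, hgap⟩ := hbounds le_rfl (fun x hx => (hpos x (Ioo_subset_Icc_self hx)).le) hv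
  exact ⟨hΦ'v, by linarith [hdecay hv], hΦv, by linarith, hgap⟩

/-- analytic core of Proposition 5.1: backward integration of
the Raychaudhuri-type ODE Φ″ − κΦ′ + qΦ = 0 on the horizon. -/
theorem stmt_10 (κ α Q Φ₁ : ℝ) (hκ : 0 ≤ κ) (hα : 0 < α) (hQ : 0 ≤ Q) (hΦ₁ : 0 < Φ₁)
    (v₀ v₁ : ℝ) (hv : v₀ ≤ v₁)
    (q Φ Φ' Φ'' : ℝ → ℝ)
    (hqc : ContinuousOn q (Set.Icc v₀ v₁))
    (hq : ∀ v ∈ Set.Icc v₀ v₁, 0 ≤ q v ∧ q v ≤ Q * Real.exp (-α * v))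
    (hΦd : ∀ v ∈ Set.Icc v₀ v₁, HasDerivAt Φ (Φ' v) v)
    (hΦ'd : ∀ v ∈ Set.Icc v₀ v₁, HasDerivAt Φ' (Φ'' v) v)
    (hΦ''c : ContinuousOn Φ'' (Set.Icc v₀ v₁))
    (hODE : ∀ v ∈ Set.Icc v₀ v₁, Φ'' v - κ * Φ' v + q v * Φ v = 0)
    (hend : Φ v₁ = Φ₁) (hend' : Φ' v₁ = 0)
    (hsmall : (Q / (α * (α + κ))) * Real.exp (-α * v₀) ≤ 1 / 2) :
    ∀ v ∈ Set.Icc v₀ v₁,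
      0 ≤ Φ' v ∧ Φ₁ / 2 ≤ Φ v ∧ Φ v ≤ Φ₁ ∧
      0 ≤ Φ₁ - Φ v ∧ Φ₁ - Φ v ≤ (Q * Φ₁ / (α * (α + κ))) * Real.exp (-α * v) :=
  stmt_10_general κ α Q Φ₁ hκ hα hQ hΦ₁ v₀ v₁ q Φ Φ' Φ'' hq hΦd hΦ'd hODE hend hend' hsmall
end

section
/- Let M > 0 and 1 < h ≤ 2. For x ∈ ℝ let r̃(x) denote the unique real number r > 2M with e^{x/(2M)} = (1 − 2M/r)/((2M/r)·e^{−r/(2M)}), and define f(x) = ∫₀ˣ √(1 − (2M/r̃(t))^h·(1 − 2M/r̃(t))) dt. Then the limit of f(x) − x as x → −∞ exists and is a finite real number. -/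
/-!
Write `c = 2M` and `s = c / r̃(t) ∈ (0, 1)`. The defining equation of `r̃` says
`e^{t/c} = (r̃/c - 1) e^{r̃/c} ≥ r̃/c - 1 ≥ 1 - s`, and since `0 ≤ s^h (1 - s) ≤ 1 - s` the integrand
`√(1 - s^h (1 - s))` lies within `1 - s` of `1`. So the integrand minus `1` is dominated by `e^{t/c}`,
which is integrable on `(-∞, 0]`; measurability holds because `r̃` is monotone, as
`r ↦ (r/c - 1) e^{r/c}` increases on `[c, ∞)`. Hence `f(x) - x = ∫₀ˣ (integrand - 1)` converges as `x → -∞`.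
-/

open MeasureTheory Filter Set Real

lemma one_sub_div_div_eq {c r : ℝ} (hc : c ≠ 0) (hr : r ≠ 0) :
    (1 - c / r) / (c / r * exp (-r / c)) = (r / c - 1) * exp (r / c) := by
  rw [neg_div, exp_neg]
  field_simp

lemma strictMonoOn_sub_one_mul_exp {c : ℝ} (hc : 0 < c) :
    StrictMonoOn (fun r => (r / c - 1) * exp (r / c)) (Ici c) := by
  intro a ha b _ hab
  have hab' : a / c < b / c := div_lt_div_of_pos_right hab hc
  have ha' : 0 ≤ a / c - 1 := by rw [sub_nonneg, one_le_div hc]; exact ha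
  calc (a / c - 1) * exp (a / c) ≤ (a / c - 1) * exp (b / c) := by gcongr
    _ < (b / c - 1) * exp (b / c) := by gcongr

lemma monotone_of_exp_div_eq {c : ℝ} (hc : 0 < c) {rt : ℝ → ℝ}
    (hrt : ∀ x, c < rt x ∧ exp (x / c) = (rt x / c - 1) * exp (rt x / c)) : Monotone rt := by
  intro x y hxy
  rw [← (strictMonoOn_sub_one_mul_exp hc).le_iff_le (hrt x).1.le (hrt y).1.le]
  simp only [← (hrt x).2, ← (hrt y).2]
  gcongr

lemma one_sub_div_le_sub_one_mul_exp {c r : ℝ} (hc : 0 < c) (hcr : c ≤ r) :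
    1 - c / r ≤ (r / c - 1) * exp (r / c) := by
  have hr : 0 < r := hc.trans_le hcr
  have h0 : 0 ≤ r / c - 1 := by rw [sub_nonneg, one_le_div hc]; exact hcr
  calc 1 - c / r = (r - c) / r := by field_simp
    _ ≤ (r - c) / c := div_le_div_of_nonneg_left (by linarith) hc hcr
    _ = (r / c - 1) * 1 := by field_simp
    _ ≤ (r / c - 1) * exp (r / c) := by gcongr; exact one_le_exp (by positivity)

lemma abs_sqrt_one_sub_rpow_mul_sub_one_le {s h : ℝ} (hs0 : 0 ≤ s) (hs1 : s ≤ 1) (hh : 0 ≤ h) :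
    |√(1 - s ^ h * (1 - s)) - 1| ≤ 1 - s := by
  set A := s ^ h * (1 - s)
  have hA0 : 0 ≤ A := mul_nonneg (rpow_nonneg hs0 h) (by linarith)
  have hA : A ≤ 1 - s := mul_le_of_le_one_left (by linarith) (rpow_le_one hs0 hs1 hh)
  have hle : √(1 - A) ≤ 1 := sqrt_le_one.mpr (by linarith)
  have hge : 1 - A ≤ √(1 - A) := by
    rw [le_sqrt (by linarith) (by linarith)]
    nlinarith
  rw [abs_of_nonpos (by linarith)]
  linarith

lemma abs_sqrt_sub_one_le_exp {c h x r : ℝ} (hc : 0 < c) (hh : 0 ≤ h) (hcr : c < r)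
    (hx : exp (x / c) = (r / c - 1) * exp (r / c)) :
    |√(1 - (c / r) ^ h * (1 - c / r)) - 1| ≤ exp (c⁻¹ * x) :=
  calc |√(1 - (c / r) ^ h * (1 - c / r)) - 1| ≤ 1 - c / r :=
        abs_sqrt_one_sub_rpow_mul_sub_one_le (div_pos hc (hc.trans hcr)).le
          (div_le_one_of_le₀ hcr.le (by linarith)) hh
    _ ≤ exp (x / c) := hx ▸ one_sub_div_le_sub_one_mul_exp hc hcr.le
    _ = exp (c⁻¹ * x) := by rw [div_eq_inv_mul]

lemma tendsto_intervalIntegral_sub_id_atBot {φ : ℝ → ℝ}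
    (hφ : IntegrableOn (fun t => φ t - 1) (Iic 0)) :
    Tendsto (fun x => (∫ t in (0 : ℝ)..x, φ t) - x) atBot (nhds (-∫ t in Iic 0, (φ t - 1))) := by
  refine (intervalIntegral_tendsto_integral_Iic 0 hφ tendsto_id).neg.congr' ?_
  filter_upwards [eventually_le_atBot 0] with x hx
  have hφx : IntervalIntegrable (fun t => φ t - 1) volume 0 x :=
    (hφ.mono_set fun t ht => (uIcc_of_ge hx ▸ ht).2).intervalIntegrable
  have hφ_add : ∫ t in (0 : ℝ)..x, φ t = (∫ t in (0 : ℝ)..x, (φ t - 1)) + x := by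
    simpa using intervalIntegral.integral_add hφx (intervalIntegrable_const (c := (1 : ℝ)))
  rw [hφ_add, intervalIntegral.integral_symm, neg_neg, add_sub_cancel_right, id]

theorem stmt_18_general (M h : ℝ) (hM : 0 < M) (hh1 : 1 < h)
    (rt : ℝ → ℝ)
    (hrt : ∀ x : ℝ, 2 * M < rt x ∧
      Real.exp (x / (2 * M)) =
        (1 - 2 * M / rt x) / ((2 * M / rt x) * Real.exp (-rt x / (2 * M)))) :
    ∃ L : ℝ, Filter.Tendsto
      (fun x : ℝ =>
        (∫ t in (0 : ℝ)..x,
          Real.sqrt (1 - (2 * M / rt t) ^ h * (1 - 2 * M / rt t))) - x)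
      Filter.atBot (nhds L) := by
  set c := 2 * M
  have hc : 0 < c := by positivity
  have hψ : ∀ x, c < rt x ∧ exp (x / c) = (rt x / c - 1) * exp (rt x / c) := fun x =>
    ⟨(hrt x).1, (hrt x).2.trans (one_sub_div_div_eq hc.ne' (hc.trans (hrt x).1).ne')⟩
  have hrt_meas : Measurable rt := (monotone_of_exp_div_eq hc hψ).measurable
  have hint : IntegrableOn (fun t => √(1 - (c / rt t) ^ h * (1 - c / rt t)) - 1) (Iic 0) :=
    (integrableOn_exp_mul_Iic (inv_pos.mpr hc) 0).mono' (by fun_prop) <| ae_of_all _ fun t =>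
      abs_sqrt_sub_one_le_exp hc (by linarith) (hψ t).1 (hψ t).2
  exact ⟨_, tendsto_intervalIntegral_sub_id_atBot hint⟩

/-- With r̃(x) the Schwarzschild radius as a function of the
tortoise coordinate x = r⋆ and f(x) = ∫₀ˣ √(1 − (2M/r̃(t))^h·(1 − 2M/r̃(t))) dt
(for 1 < h ≤ 2), the limit of f(x) − x as x → −∞ exists and is finite. -/
theorem stmt_18 (M h : ℝ) (hM : 0 < M) (hh1 : 1 < h) (hh2 : h ≤ 2)
    (rt : ℝ → ℝ)
    (hrt : ∀ x : ℝ, 2 * M < rt x ∧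
      Real.exp (x / (2 * M)) =
        (1 - 2 * M / rt x) / ((2 * M / rt x) * Real.exp (-rt x / (2 * M)))) :
    ∃ L : ℝ, Filter.Tendsto
      (fun x : ℝ =>
        (∫ t in (0 : ℝ)..x,
          Real.sqrt (1 - (2 * M / rt t) ^ h * (1 - 2 * M / rt t))) - x)
      Filter.atBot (nhds L) :=
  stmt_18_general M h hM hh1 rt hrt
end
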